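/- In a gcd-monoid, if i is negative in the multifraction a, then (a • R_{i,x}) • R_{i,y} is defined if and only if a • R_{i,xy} is defined, and then they are equal; if i is positive, the same holds with R_{i,yx} in place of R_{i,xy}. -/

import Mathlib

namespace MFR

variable {M : Type*} [Monoid M]

/-- `a` left-divides `b`. -/
def LeftDvd (a b : M) : Prop := ∃ x, a * x = b

/-- `a` right-divides `b`. -/
def RightDvd (a b : M) : Prop := ∃ x, x * a = b

/-- `m` is a right lcm of `a` and `b`. -/
def IsRightLcm (a b m : M) : Prop :=
  LeftDvd a m ∧ LeftDvd b m ∧ ∀ m', LeftDvd a m' → LeftDvd b m' → LeftDvd m m'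

/-- `m` is a left lcm of `a` and `b`. -/
def IsLeftLcm (a b m : M) : Prop :=
  RightDvd a m ∧ RightDvd b m ∧ ∀ m', RightDvd a m' → RightDvd b m' → RightDvd m m'

/-- `d` is a left gcd of `a` and `b`. -/
def IsLeftGcd (a b d : M) : Prop :=
  LeftDvd d a ∧ LeftDvd d b ∧ ∀ e, LeftDvd e a → LeftDvd e b → LeftDvd e d

/-- `d` is a right gcd of `a` and `b`. -/
def IsRightGcd (a b d : M) : Prop :=
  RightDvd d a ∧ RightDvd d b ∧ ∀ e, RightDvd e a → RightDvd e b → RightDvd e d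

/-- A gcd-monoid: cancellative, no nontrivial invertible elements,
left and right gcds exist. -/
structure IsGcdMon (M : Type*) [Monoid M] : Prop where
  mul_left_cancel : ∀ a b c : M, a * b = a * c → b = c
  mul_right_cancel : ∀ a b c : M, b * a = c * a → b = c
  unit_eq_one : ∀ a : M, IsUnit a → a = 1
  exists_leftGcd : ∀ a b : M, ∃ d, IsLeftGcd a b d
  exists_rightGcd : ∀ a b : M, ∃ d, IsRightGcd a b d

/-- Proper left divisibility: `a < b`. -/
def PLDvd (a b : M) : Prop := ∃ x, ¬ IsUnit x ∧ a * x = b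

/-- Proper right divisibility. -/
def PRDvd (a b : M) : Prop := ∃ x, ¬ IsUnit x ∧ x * a = b

/-- Noetherian: proper left and right divisibility are well-founded. -/
def Noeth (M : Type*) [Monoid M] : Prop :=
  WellFounded (PLDvd (M := M)) ∧ WellFounded (PRDvd (M := M))

/-- Proper factor relation. -/
def Factor (a b : M) : Prop := ∃ x y, x * a * y = b ∧ (¬ IsUnit x ∨ ¬ IsUnit y)

/-- Atoms: not a product of two non-invertible elements. -/
def Atomic (a : M) : Prop := ¬ IsUnit a ∧ ∀ x y, a = x * y → IsUnit x ∨ IsUnit y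

/-- Existence of a common right multiple. -/
def CommonRightMul (a b : M) : Prop := ∃ m, LeftDvd a m ∧ LeftDvd b m

/-- Existence of a common left multiple. -/
def CommonLeftMul (a b : M) : Prop := ∃ m, RightDvd a m ∧ RightDvd b m

/-- The 3-Ore condition. -/
def ThreeOre (M : Type*) [Monoid M] : Prop :=
  (∀ a b c : M, CommonRightMul a b → CommonRightMul a c → CommonRightMul b c →
    ∃ m, LeftDvd a m ∧ LeftDvd b m ∧ LeftDvd c m) ∧
  (∀ a b c : M, CommonLeftMul a b → CommonLeftMul a c → CommonLeftMul b c →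
    ∃ m, RightDvd a m ∧ RightDvd b m ∧ RightDvd c m)

/-- The product of two multifractions. -/
def fprod : List M → List M → List M
  | [], b => b
  | a, [] => a
  | a, h :: t =>
    if a.length % 2 = 1 then a.dropLast ++ ((a.getLast?.getD 1) * h) :: t
    else a ++ h :: t

/-- The congruence `≃` on multifractions generated by `(1,∅)`, `(a/a,∅)`, `(1/a/a,∅)`. -/
inductive SimEq : List M → List M → Prop
  | one : SimEq [1] []
  | divPos (a : M) : SimEq [a, a] []
  | divNeg (a : M) : SimEq [1, a, a] []
  | refl (a : List M) : SimEq a a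
  | symm {a b} : SimEq a b → SimEq b a
  | trans {a b c} : SimEq a b → SimEq b c → SimEq a c
  | mul {a b c d} : SimEq a b → SimEq c d → SimEq (fprod a c) (fprod b d)

/-- The reduction rule `R_{i,x}` on multifractions (entries indexed from 1):
`Reduce i x a b` means `b = a • R_{i,x}`. -/
def Reduce (i : ℕ) (x : M) (a b : List M) : Prop :=
  (i = 1 ∧ ∃ (a₁ a₂ b₁ b₂ : M) (s : List M),
    a = a₁ :: a₂ :: s ∧ b = b₁ :: b₂ :: s ∧ b₁ * x = a₁ ∧ b₂ * x = a₂) ∨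
  (2 ≤ i ∧ i % 2 = 0 ∧ ∃ (p s : List M) (am ai ap bi bp x' : M),
    p.length = i - 2 ∧
    a = p ++ am :: ai :: ap :: s ∧
    b = p ++ (am * x') :: bi :: bp :: s ∧
    IsRightLcm x ai (x * bi) ∧ x * bi = ai * x' ∧ x * bp = ap) ∨
  (3 ≤ i ∧ i % 2 = 1 ∧ ∃ (p s : List M) (am ai ap bi bp x' : M),
    p.length = i - 2 ∧
    a = p ++ am :: ai :: ap :: s ∧
    b = p ++ (x' * am) :: bi :: bp :: s ∧
    IsLeftLcm x ai (bi * x) ∧ bi * x = x' * ai ∧ bp * x = ap)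

/-- One-step reduction. -/
def Red (a b : List M) : Prop := ∃ i x, x ≠ (1 : M) ∧ Reduce i x a b

/-- Reflexive-transitive closure of one-step reduction. -/
def RedStar : List M → List M → Prop := Relation.ReflTransGen Red

/-- Irreducible multifractions. -/
def RIrred (a : List M) : Prop := ∀ b, ¬ Red a b

/-- Right basic elements: closure of the atoms under right complement. -/
inductive RightBasic : M → Prop
  | atom {a : M} : Atomic a → RightBasic a
  | compl {a b a' : M} : RightBasic a → RightBasic b →
      IsRightLcm a b (b * a') → RightBasic a'

/-- Minimal number of atoms needed to express `a`. -/
noncomputable def atomLen (a : M) : ℕ :=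
  sInf {n | ∃ l : List M, (∀ x ∈ l, Atomic x) ∧ l.length = n ∧ l.prod = a}

/-
Let `i` be negative and write `x b_i = x ∨ a_i`. The iterated lcm law says that `xy ∨ a_i`
is `x (y ∨ b_i)`, so applying `R_{i,x}` and then `R_{i,y}` is applying `R_{i,xy}`. Conversely,
if `xy ∨ a_i` exists it is a common multiple of `x` and `a_i`, so `x ∨ a_i` exists, and `b_i`
divides `y c_i`, so `y ∨ b_i` exists. In a gcd-monoid lcms are unique, and cancellativity then
makes every reduction deterministic. A positive level is a negative level of the opposite monoid,
which is again a gcd-monoid; at level 1 the rule is plain right division.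
-/

theorem IsGcdMon.isCancelMul (h : IsGcdMon M) : IsCancelMul M where
  mul_left_cancel a _ _ := h.mul_left_cancel a _ _
  mul_right_cancel a _ _ := h.mul_right_cancel a _ _

theorem IsGcdMon.exists_isRightLcm (h : IsGcdMon M) {a b m : M}
    (ha : LeftDvd a m) (hb : LeftDvd b m) : ∃ l, IsRightLcm a b l := by
  have := h.isCancelMul
  obtain ⟨a', rfl⟩ := ha
  obtain ⟨b', hb'⟩ := hb
  -- the lcm is `a * u`, where `a' = u * g` and `b' = v * g` with `g` the right gcd of `a', b'`
  obtain ⟨g, ⟨u, rfl⟩, ⟨v, rfl⟩, hg⟩ := h.exists_rightGcd a' b'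
  have hab : a * u = b * v := h.mul_right_cancel g _ _ (by rw [mul_assoc, mul_assoc, hb'])
  refine ⟨a * u, ⟨u, rfl⟩, ⟨v, hab.symm⟩, ?_⟩
  rintro _ ⟨p, rfl⟩ ⟨q, hq⟩
  obtain ⟨d, ⟨w, hw⟩, hdp, hd⟩ := h.exists_leftGcd (a * u) (a * p)
  obtain ⟨u₁, rfl⟩ := hd a ⟨u, rfl⟩ ⟨p, rfl⟩
  obtain ⟨v₁, hv₁⟩ := hd b ⟨v, hab.symm⟩ ⟨q, hq⟩
  have hu : u₁ * w = u := h.mul_left_cancel a _ _ (by rw [← mul_assoc, hw])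
  have hv : v₁ * w = v := h.mul_left_cancel b _ _ (by rw [← mul_assoc, hv₁, hw, hab])
  obtain ⟨k, hk⟩ := hg (w * g) ⟨u₁, by rw [← mul_assoc, hu]⟩ ⟨v₁, by rw [← mul_assoc, hv]⟩
  have hkw : k * w = 1 := h.mul_right_cancel g _ _ (by rw [one_mul, mul_assoc, hk])
  rwa [← hw, h.unit_eq_one w (.of_mul_eq_one_right k hkw), mul_one]

theorem IsRightLcm.unique (h : IsGcdMon M) {a b m m' : M}
    (hm : IsRightLcm a b m) (hm' : IsRightLcm a b m') : m = m' := by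
  have := h.isCancelMul
  obtain ⟨s, rfl⟩ := hm.2.2 m' hm'.1 hm'.2.1
  obtain ⟨t, ht⟩ := hm'.2.2 m hm.1 hm.2.1
  have hst : s * t = 1 := mul_left_cancel (a := m) (by rw [← mul_assoc, ht, mul_one])
  rw [h.unit_eq_one s (.of_mul_eq_one t hst), mul_one]

theorem IsRightLcm.mul [IsLeftCancelMul M] {x y a b c : M}
    (hx : IsRightLcm x a (x * b)) (hy : IsRightLcm y b (y * c)) :
    IsRightLcm (x * y) a (x * y * c) := by
  obtain ⟨x', hx'⟩ := hx.2.1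
  obtain ⟨y', hy'⟩ := hy.2.1
  refine ⟨⟨c, rfl⟩, ⟨x' * y', by rw [← mul_assoc, hx', mul_assoc, hy', mul_assoc]⟩, ?_⟩
  rintro _ ⟨p, rfl⟩ ⟨q, hq⟩
  obtain ⟨w, hw⟩ := hx.2.2 (x * y * p) ⟨y * p, (mul_assoc x y p).symm⟩ ⟨q, hq⟩
  have hbw : b * w = y * p := mul_left_cancel (a := x) (by rw [← mul_assoc, hw, mul_assoc])
  obtain ⟨v, hv⟩ := hy.2.2 (b * w) ⟨p, hbw.symm⟩ ⟨w, rfl⟩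
  exact ⟨v, by rw [mul_assoc x y c, mul_assoc, hv, ← mul_assoc, hw]⟩

section Opposite

open MulOpposite

theorem leftDvd_op_iff {a b : M} : LeftDvd (op a) (op b) ↔ RightDvd a b :=
  ⟨fun ⟨c, hc⟩ => ⟨unop c, congrArg unop hc⟩, fun ⟨c, hc⟩ => ⟨op c, congrArg op hc⟩⟩

theorem rightDvd_op_iff {a b : M} : RightDvd (op a) (op b) ↔ LeftDvd a b :=
  ⟨fun ⟨c, hc⟩ => ⟨unop c, congrArg unop hc⟩, fun ⟨c, hc⟩ => ⟨op c, congrArg op hc⟩⟩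

theorem isRightLcm_op_iff {a b m : M} : IsRightLcm (op a) (op b) (op m) ↔ IsLeftLcm a b m := by
  simp only [IsRightLcm, IsLeftLcm, op_surjective.forall, leftDvd_op_iff]

theorem isLeftGcd_op_iff {a b d : M} : IsLeftGcd (op a) (op b) (op d) ↔ IsRightGcd a b d := by
  simp only [IsLeftGcd, IsRightGcd, op_surjective.forall, leftDvd_op_iff]

theorem isRightGcd_op_iff {a b d : M} : IsRightGcd (op a) (op b) (op d) ↔ IsLeftGcd a b d := by
  simp only [IsLeftGcd, IsRightGcd, op_surjective.forall, rightDvd_op_iff]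

theorem IsGcdMon.op (h : IsGcdMon M) : IsGcdMon Mᵐᵒᵖ where
  mul_left_cancel a _ _ hbc := unop_injective (h.mul_right_cancel (unop a) _ _ (congrArg unop hbc))
  mul_right_cancel a _ _ hbc := unop_injective (h.mul_left_cancel (unop a) _ _ (congrArg unop hbc))
  unit_eq_one a ha := unop_injective (h.unit_eq_one (unop a) (isUnit_op.mp ha))
  exists_leftGcd a b :=
    let ⟨d, hd⟩ := h.exists_rightGcd (unop a) (unop b)
    ⟨MulOpposite.op d, isLeftGcd_op_iff.mpr hd⟩
  exists_rightGcd a b :=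
    let ⟨d, hd⟩ := h.exists_leftGcd (unop a) (unop b)
    ⟨MulOpposite.op d, isRightGcd_op_iff.mpr hd⟩

end Opposite

/-- `R_{i,x}` at a negative level `i`; `p` holds the entries `a_1, …, a_{i-2}`. At a positive
level the rule is this one read in `Mᵐᵒᵖ`. -/
def NegReduce (i : ℕ) (x : M) (a b : List M) : Prop :=
  ∃ (p s : List M) (am ai ap bi bp x' : M), p.length + 2 = i ∧
    a = p ++ am :: ai :: ap :: s ∧ b = p ++ (am * x') :: bi :: bp :: s ∧
    IsRightLcm x ai (x * bi) ∧ x * bi = ai * x' ∧ x * bp = ap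

namespace NegReduce

variable {i : ℕ} {x y : M} {a b c : List M}

theorem comp [IsLeftCancelMul M] (hab : NegReduce i x a b) (hbc : NegReduce i y b c) :
    NegReduce i (x * y) a c := by
  obtain ⟨p, s, am, ai, _, bi, bp, x', hp, rfl, rfl, hx, hx', rfl⟩ := hab
  obtain ⟨q, t, _, _, _, ci, cp, y', hq, hb, rfl, hy, hy', rfl⟩ := hbc
  obtain ⟨rfl, hcons⟩ := List.append_inj hb (by omega)
  simp only [List.cons.injEq] at hcons
  obtain ⟨rfl, rfl, hbp, rfl⟩ := hcons
  refine ⟨p, s, am, ai, _, ci, cp, x' * y', hp, rfl, by rw [mul_assoc], hx.mul hy, ?_, ?_⟩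
  · rw [mul_assoc, hy', ← mul_assoc, hx', mul_assoc]
  · rw [mul_assoc, hbp]

theorem decomp (h : IsGcdMon M) (hac : NegReduce i (x * y) a c) :
    ∃ b c', NegReduce i x a b ∧ NegReduce i y b c' := by
  obtain ⟨p, s, am, ai, _, ci, cp, _, hp, rfl, -, hxy, -, rfl⟩ := hac
  have hx : LeftDvd x (x * y * ci) := ⟨y * ci, (mul_assoc x y ci).symm⟩
  obtain ⟨l, hl⟩ := h.exists_isRightLcm hx hxy.2.1
  obtain ⟨bi, rfl⟩ := hl.1
  obtain ⟨x', hx'⟩ := hl.2.1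
  obtain ⟨w, hw⟩ := hl.2.2 _ hx hxy.2.1
  have hbw : bi * w = y * ci := h.mul_left_cancel x _ _ (by rw [← mul_assoc, hw, mul_assoc])
  obtain ⟨l', hl'⟩ := h.exists_isRightLcm ⟨ci, rfl⟩ ⟨w, hbw⟩
  obtain ⟨ci', rfl⟩ := hl'.1
  obtain ⟨y', hy'⟩ := hl'.2.1
  exact ⟨_, _, ⟨p, s, am, ai, _, bi, y * cp, x', hp, rfl, rfl, hl, hx'.symm, (mul_assoc ..).symm⟩,
    ⟨p, s, am * x', bi, y * cp, ci', cp, y', hp, rfl, rfl, hl', hy'.symm, rfl⟩⟩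

theorem unique (h : IsGcdMon M) (hb : NegReduce i x a b) (hc : NegReduce i x a c) : b = c := by
  obtain ⟨p, s, am, ai, ap, bi, bp, x', hp, rfl, rfl, hx, hx', hbp⟩ := hb
  obtain ⟨q, t, _, _, _, ci, cp, x'', hq, ha, rfl, hy, hy', hcp⟩ := hc
  obtain ⟨rfl, hcons⟩ := List.append_inj ha (by omega)
  simp only [List.cons.injEq] at hcons
  obtain ⟨rfl, rfl, rfl, rfl⟩ := hcons
  obtain rfl : bi = ci := h.mul_left_cancel x _ _ (hx.unique h hy)
  obtain rfl : x' = x'' := h.mul_left_cancel ai _ _ (hx'.symm.trans hy')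
  obtain rfl : bp = cp := h.mul_left_cancel x _ _ (hbp.trans hcp.symm)
  rfl

end NegReduce

section

open MulOpposite

variable {i : ℕ} {x y : M} {a b c : List M}

theorem reduce_one_iff :
    Reduce 1 x a b ↔ ∃ b₁ b₂ s, a = b₁ * x :: b₂ * x :: s ∧ b = b₁ :: b₂ :: s := by
  constructor
  · rintro (⟨-, _, _, b₁, b₂, s, rfl, rfl, rfl, rfl⟩ | ⟨h2, -⟩ | ⟨h3, -⟩)
    · exact ⟨b₁, b₂, s, rfl, rfl⟩
    · omega
    · omega
  · rintro ⟨b₁, b₂, s, rfl, rfl⟩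
    exact Or.inl ⟨rfl, _, _, b₁, b₂, s, rfl, rfl, rfl, rfl⟩

theorem reduce_iff_negReduce (hi : i % 2 = 0) : Reduce i x a b ↔ NegReduce i x a b := by
  constructor
  · rintro (⟨rfl, -⟩ | ⟨h2, -, p, s, am, ai, ap, bi, bp, x', hp, hrest⟩ | ⟨-, hi', -⟩)
    · omega
    · exact ⟨p, s, am, ai, ap, bi, bp, x', by omega, hrest⟩
    · omega
  · rintro ⟨p, s, am, ai, ap, bi, bp, x', hp, hrest⟩
    exact Or.inr (Or.inl ⟨by omega, hi, p, s, am, ai, ap, bi, bp, x', by omega, hrest⟩)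

theorem reduce_iff_negReduce_op (hi : i % 2 = 1) (h3 : 3 ≤ i) :
    Reduce i x a b ↔ NegReduce i (op x) (a.map op) (b.map op) := by
  constructor
  · rintro (⟨rfl, -⟩ | ⟨-, hi', -⟩ |
      ⟨-, -, p, s, am, ai, _, bi, bp, x', hp, rfl, rfl, hl, hx', rfl⟩)
    · omega
    · omega
    refine ⟨p.map op, s.map op, op am, op ai, op (bp * x), op bi, op bp, op x',
      by rw [List.length_map]; omega, by simp, by simp, ?_, congrArg op hx', rfl⟩
    rw [← op_mul]
    exact isRightLcm_op_iff.2 hl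
  · rintro ⟨P, S, AM, AI, AP, BI, BP, X', hP, hA, hB, hl, hX', hBP⟩
    obtain ⟨p, rfl⟩ : ∃ p, P = p.map op := ⟨P.map unop, by simp⟩
    obtain ⟨s, rfl⟩ : ∃ s, S = s.map op := ⟨S.map unop, by simp⟩
    obtain ⟨am, rfl⟩ := op_surjective AM
    obtain ⟨ai, rfl⟩ := op_surjective AI
    obtain ⟨ap, rfl⟩ := op_surjective AP
    obtain ⟨bi, rfl⟩ := op_surjective BI
    obtain ⟨bp, rfl⟩ := op_surjective BP
    obtain ⟨x', rfl⟩ := op_surjective X'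
    rw [List.length_map] at hP
    refine Or.inr (Or.inr ⟨h3, hi, p, s, am, ai, ap, bi, bp, x', by omega, ?_, ?_,
      isRightLcm_op_iff.1 hl, op_injective hX', op_injective hBP⟩)
    · exact List.map_injective_iff.2 op_injective (by simpa using hA)
    · exact List.map_injective_iff.2 op_injective (by simpa using hB)

namespace Reduce

theorem comp_of_even [IsLeftCancelMul M] (hi : i % 2 = 0) (hab : Reduce i x a b)
    (hbc : Reduce i y b c) : Reduce i (x * y) a c := by
  rw [reduce_iff_negReduce hi] at *
  exact hab.comp hbc

theorem decomp_of_even (h : IsGcdMon M) (hi : i % 2 = 0) (hac : Reduce i (x * y) a c) :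
    ∃ b c', Reduce i x a b ∧ Reduce i y b c' := by
  simpa only [reduce_iff_negReduce hi] using ((reduce_iff_negReduce hi).1 hac).decomp h

theorem comp_of_odd [IsRightCancelMul M] (hi : i % 2 = 1) (hab : Reduce i x a b)
    (hbc : Reduce i y b c) : Reduce i (y * x) a c := by
  obtain rfl | h3 : i = 1 ∨ 3 ≤ i := by omega
  · rw [reduce_one_iff] at *
    obtain ⟨b₁, b₂, s, rfl, rfl⟩ := hab
    obtain ⟨c₁, c₂, t, hb, rfl⟩ := hbc
    simp only [List.cons.injEq] at hb
    obtain ⟨rfl, rfl, rfl⟩ := hb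
    exact ⟨c₁, c₂, _, by simp only [mul_assoc], rfl⟩
  · rw [reduce_iff_negReduce_op hi h3] at *
    rw [op_mul]
    exact hab.comp hbc

theorem decomp_of_odd (h : IsGcdMon M) (hi : i % 2 = 1) (hac : Reduce i (y * x) a c) :
    ∃ b c', Reduce i x a b ∧ Reduce i y b c' := by
  obtain rfl | h3 : i = 1 ∨ 3 ≤ i := by omega
  · obtain ⟨c₁, c₂, s, rfl, rfl⟩ := reduce_one_iff.1 hac
    exact ⟨c₁ * y :: c₂ * y :: s, _, reduce_one_iff.2 ⟨_, _, _, by simp only [mul_assoc], rfl⟩,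
      reduce_one_iff.2 ⟨_, _, _, rfl, rfl⟩⟩
  · rw [reduce_iff_negReduce_op hi h3, op_mul] at hac
    obtain ⟨B, C, hB, hC⟩ := hac.decomp h.op
    refine ⟨B.map unop, C.map unop, ?_, ?_⟩ <;> rw [reduce_iff_negReduce_op hi h3] <;> simpa

theorem unique (h : IsGcdMon M) (hb : Reduce i x a b) (hc : Reduce i x a c) : b = c := by
  have := h.isCancelMul
  obtain rfl | ⟨hi, h3⟩ | hi : i = 1 ∨ (i % 2 = 1 ∧ 3 ≤ i) ∨ i % 2 = 0 := by omega
  · obtain ⟨b₁, b₂, s, rfl, rfl⟩ := reduce_one_iff.1 hb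
    obtain ⟨c₁, c₂, t, ha, rfl⟩ := reduce_one_iff.1 hc
    simp only [List.cons.injEq] at ha
    obtain ⟨h₁, h₂, rfl⟩ := ha
    rw [mul_right_cancel h₁, mul_right_cancel h₂]
  · rw [reduce_iff_negReduce_op hi h3] at hb hc
    exact List.map_injective_iff.2 op_injective (hb.unique h.op hc)
  · rw [reduce_iff_negReduce hi] at hb hc
    exact hb.unique h hc

end Reduce

end

/-- composition of two reductions at the same level. -/
theorem stmt_12 {M : Type*} [Monoid M] (h : IsGcdMon M) (i : ℕ) (x y : M)
    (a : List M) :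
    (i % 2 = 0 →
      ((∃ b c, Reduce i x a b ∧ Reduce i y b c) ↔ ∃ c, Reduce i (x * y) a c) ∧
      (∀ b c c', Reduce i x a b → Reduce i y b c → Reduce i (x * y) a c' →
        c = c')) ∧
    (i % 2 = 1 →
      ((∃ b c, Reduce i x a b ∧ Reduce i y b c) ↔ ∃ c, Reduce i (y * x) a c) ∧
      (∀ b c c', Reduce i x a b → Reduce i y b c → Reduce i (y * x) a c' →
        c = c')) := by
  have := h.isCancelMul
  refine ⟨fun hi => ⟨⟨?_, fun ⟨c, hac⟩ => hac.decomp_of_even h hi⟩, ?_⟩,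
    fun hi => ⟨⟨?_, fun ⟨c, hac⟩ => hac.decomp_of_odd h hi⟩, ?_⟩⟩
  · rintro ⟨b, c, hab, hbc⟩
    exact ⟨c, hab.comp_of_even hi hbc⟩
  · intro b c c' hab hbc hac
    exact (hab.comp_of_even hi hbc).unique h hac
  · rintro ⟨b, c, hab, hbc⟩
    exact ⟨c, hab.comp_of_odd hi hbc⟩
  · intro b c c' hab hbc hac
    exact (hab.comp_of_odd hi hbc).unique h hac

end MFR
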